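/- (Proposition 3, law-level form) Let d ∈ ℕ*, f_0,…,f_{d-1} ≥ 0, f_d = 0, g_0,…,g_d ≥ 0 with f_i + g_i > 0 for i = 1,…,d, let x_0^{in} > 0 and x_i^{in} ≥ 0, let (x_0^ε,…,x_d^ε) solve the rescaled linear ODE system dx_0/dt = -(f_0+g_0)x_0, ε dx_i/dt = f_{i-1}x_{i-1} - (f_i+g_i)x_i with this initial data, and set x̄_0(t) = x_0^{in} exp(-(f_0+g_0)t) and p_i = Π_{j=0}^{i-1} f_j/(f_{j+1}+g_{j+1}). Fix t > 0. If, for each ε > 0, X_0^ε(t) = ε · Z_0^ε with Z_0^ε Poisson of mean x_0^ε(t)/ε, and X_i^ε(t) is Poisson of mean x_i^ε(t) for i = 1,…,d, then as ε → 0: X_0^ε(t) converges in law to the deterministic value x̄_0(t), and for each i = 1,…,d, X_i^ε(t) converges in law to a Poisson random variable with mean p_i x̄_0(t). -/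

import Mathlib

/-!
The slow compartment is explicit, `x₀(s) = x₀ⁱⁿ e^{-(f₀+g₀)s}`, and each fast compartment
`ε xᵢ' = f_{i-1} x_{i-1} - (fᵢ+gᵢ) xᵢ` relaxes at rate `(fᵢ+gᵢ)/ε` towards
`f_{i-1} x_{i-1} / (fᵢ+gᵢ)`. By induction on `i`, `xᵢ^ε(s) → pᵢ x̄₀(t)` as `ε → 0⁺`, uniformly
for `s` in a left neighbourhood of `t`.

For the laws: `ε · Poisson(x̄₀(t)/ε)` has mean `x̄₀(t)` and variance `ε x̄₀(t)`, so it
concentrates at `x̄₀(t)` (Chebyshev's argument, via `|h y - h λ| ≤ η + K (y - λ)²`); and the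
expectation of a bounded function under `Poisson(m)` depends continuously on `m`.
-/

open MeasureTheory Filter Topology Set Real
open scoped Nat

/-- Defined for every real `m`: for `m < 0` some weights are negative, and `ENNReal.ofReal`
clips them to `0`, whence the `max · 0` below. -/
noncomputable def poissonWeight (m : ℝ) (n : ℕ) : ℝ := exp (-m) * m ^ n / n !

lemma poissonWeight_nonneg {m : ℝ} (hm : 0 ≤ m) (n : ℕ) : 0 ≤ poissonWeight m n := by
  unfold poissonWeight; positivity

lemma hasSum_poissonWeight_mul_descFactorial (m : ℝ) (k : ℕ) :
    HasSum (fun n => poissonWeight m n * n.descFactorial k) (m ^ k) := by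
  rw [← hasSum_nat_add_iff' k]
  have hlow : ∑ i ∈ Finset.range k, poissonWeight m i * i.descFactorial k = 0 :=
    Finset.sum_eq_zero fun i hi => by
      rw [Nat.descFactorial_eq_zero_iff_lt.mpr (Finset.mem_range.mp hi)]; simp
  have hexp : HasSum (fun n => m ^ k * poissonWeight m n) (m ^ k) := by
    have := ((NormedSpace.expSeries_div_hasSum_exp m).mul_left (exp (-m))).mul_left (m ^ k)
    rw [← exp_eq_exp_ℝ, ← exp_add, neg_add_cancel, exp_zero, mul_one] at this
    exact this.congr_fun fun n => by unfold poissonWeight; ring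
  rw [hlow, sub_zero]
  refine hexp.congr_fun fun n => ?_
  have hfac := Nat.factorial_mul_descFactorial (Nat.le_add_left k n)
  rw [Nat.add_sub_cancel] at hfac
  unfold poissonWeight
  rw [← hfac]
  push_cast
  field_simp
  ring

lemma hasSum_poissonWeight (m : ℝ) : HasSum (poissonWeight m) 1 := by
  simpa using hasSum_poissonWeight_mul_descFactorial m 0

lemma hasSum_poissonWeight_mul_sq_sub {lam ε : ℝ} (hε : ε ≠ 0) :
    HasSum (fun n : ℕ => poissonWeight (lam / ε) n * (ε * n - lam) ^ 2) (ε * lam) := by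
  have h2 := (hasSum_poissonWeight_mul_descFactorial (lam / ε) 2).mul_left (ε ^ 2)
  have h1 := (hasSum_poissonWeight_mul_descFactorial (lam / ε) 1).mul_left (ε ^ 2 - 2 * ε * lam)
  have h0 := (hasSum_poissonWeight (lam / ε)).mul_left (lam ^ 2)
  have hsum := (h2.add h1).add h0
  rw [show ε ^ 2 * (lam / ε) ^ 2 + (ε ^ 2 - 2 * ε * lam) * (lam / ε) ^ 1 + lam ^ 2 * 1
    = ε * lam by field_simp; ring] at hsum
  refine hsum.congr_fun fun n => ?_
  rw [Nat.cast_descFactorial_two, Nat.descFactorial_one]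
  ring

lemma exists_abs_sub_le_add_mul_sq {h : ℝ → ℝ} {x₀ C η : ℝ} (hh : ContinuousAt h x₀)
    (hC : ∀ y, |h y| ≤ C) (hη : 0 < η) :
    ∃ K, ∀ y, |h y - h x₀| ≤ η + K * (y - x₀) ^ 2 := by
  obtain ⟨δ, hδ, hclose⟩ := Metric.continuousAt_iff.mp hh η hη
  have hC0 : 0 ≤ C := (abs_nonneg _).trans (hC x₀)
  refine ⟨2 * C / δ ^ 2, fun y => ?_⟩
  rcases lt_or_ge |y - x₀| δ with hnear | hfar
  · have := hclose (x := y) hnear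
    rw [Real.dist_eq] at this
    have : 0 ≤ 2 * C / δ ^ 2 * (y - x₀) ^ 2 := by positivity
    linarith
  · have hsq : δ ^ 2 ≤ (y - x₀) ^ 2 := by
      rw [← sq_abs (y - x₀)]; exact pow_le_pow_left₀ hδ.le hfar 2
    have hK : 2 * C ≤ 2 * C / δ ^ 2 * (y - x₀) ^ 2 := by
      rw [div_mul_eq_mul_div, le_div_iff₀ (by positivity)]
      exact mul_le_mul_of_nonneg_left hsq (by positivity)
    linarith [abs_sub (h y) (h x₀), hC y, hC x₀]

lemma tendsto_tsum_poissonWeight_div_mul {lam : ℝ} (hlam : 0 ≤ lam) {h : ℝ → ℝ}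
    (hh : Continuous h) {C : ℝ} (hC : ∀ y, |h y| ≤ C) :
    Tendsto (fun ε : ℝ => ∑' n : ℕ, poissonWeight (lam / ε) n * h (ε * n)) (𝓝[>] 0)
      (𝓝 (h lam)) := by
  rw [Metric.tendsto_nhds]
  intro η hη
  obtain ⟨K, hclose⟩ := exists_abs_sub_le_add_mul_sq hh.continuousAt hC (half_pos hη)
  have hsmall : Tendsto (fun ε : ℝ => K * (ε * lam)) (𝓝[>] 0) (𝓝 0) := by
    have := (((tendsto_id (x := 𝓝 (0 : ℝ))).mul_const lam).const_mul K).mono_left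
      (nhdsWithin_le_nhds (s := Ioi 0))
    simpa using this
  filter_upwards [hsmall.eventually (gt_mem_nhds (half_pos hη)), self_mem_nhdsWithin]
    with ε hεsmall (hε : 0 < ε)
  have hp := poissonWeight_nonneg (div_nonneg hlam hε.le)
  have hsum : HasSum (fun n : ℕ => poissonWeight (lam / ε) n * h (ε * n)) _ :=
    (Summable.of_norm_bounded ((hasSum_poissonWeight (lam / ε)).summable.mul_right C)
      fun n => by
        rw [norm_mul, Real.norm_of_nonneg (hp n), Real.norm_eq_abs]
        exact mul_le_mul_of_nonneg_left (hC _) (hp n)).hasSum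
  have hdiff := hsum.sub ((hasSum_poissonWeight (lam / ε)).mul_right (h lam))
  rw [one_mul] at hdiff
  have hbound := tsum_of_norm_bounded
    (((hasSum_poissonWeight (lam / ε)).mul_right (η / 2)).add
      ((hasSum_poissonWeight_mul_sq_sub (lam := lam) hε.ne').mul_left K))
    (f := fun n : ℕ => poissonWeight (lam / ε) n * h (ε * n) - poissonWeight (lam / ε) n * h lam)
    fun n => by
      rw [← mul_sub, norm_mul, Real.norm_of_nonneg (hp n), Real.norm_eq_abs]
      calc poissonWeight (lam / ε) n * |h (ε * n) - h lam|
          ≤ poissonWeight (lam / ε) n * (η / 2 + K * (ε * n - lam) ^ 2) :=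
            mul_le_mul_of_nonneg_left (hclose _) (hp n)
        _ = _ := by ring
  rw [hdiff.tsum_eq, Real.norm_eq_abs] at hbound
  rw [Real.dist_eq]
  linarith

lemma continuous_tsum_max_poissonWeight_mul {h : ℕ → ℝ} {C : ℝ} (hC : ∀ n, |h n| ≤ C) :
    Continuous fun m => ∑' n, max (poissonWeight m n) 0 * h n := by
  rw [continuous_iff_continuousAt]
  intro m₀
  set R := |m₀| + 1
  have hon : ContinuousOn (fun m => ∑' n, max (poissonWeight m n) 0 * h n)
      (Ioo (m₀ - 1) (m₀ + 1)) := by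
    refine continuousOn_tsum (u := fun n => exp R * (R ^ n / n !) * C)
      (fun n => by unfold poissonWeight; fun_prop)
      (((NormedSpace.expSeries_div_hasSum_exp R).summable.mul_left (exp R)).mul_right C)
      fun n m hm => ?_
    have hmR : |m| ≤ R := by
      rw [abs_le]; constructor <;> linarith [hm.1, hm.2, abs_le.mp (le_refl |m₀|)]
    rw [norm_mul, Real.norm_eq_abs, Real.norm_eq_abs]
    refine mul_le_mul ?_ (hC n) (abs_nonneg _) (by positivity)
    calc |max (poissonWeight m n) 0| ≤ |poissonWeight m n| := by
          rw [abs_of_nonneg (le_max_right _ _)]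
          exact max_le (le_abs_self _) (abs_nonneg _)
      _ = exp (-m) * (|m| ^ n / n !) := by
          unfold poissonWeight; rw [abs_div, abs_mul, abs_pow, abs_of_pos (exp_pos _),
            Nat.abs_cast, mul_div_assoc]
      _ ≤ exp R * (R ^ n / n !) := by
          gcongr
          · linarith [neg_abs_le m]
  exact hon.continuousAt (Ioo_mem_nhds (by linarith) (by linarith))

lemma integral_comp_eq_tsum_of_measure_eq_ofReal {Ω : Type*} [MeasurableSpace Ω]
    {μ : Measure Ω} [IsFiniteMeasure μ] {Y : Ω → ℕ} (hY : Measurable Y) {q : ℕ → ℝ}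
    (hlaw : ∀ n, μ {ω | Y ω = n} = ENNReal.ofReal (q n)) {h : ℕ → ℝ} {C : ℝ}
    (hC : ∀ n, |h n| ≤ C) :
    ∫ ω, h (Y ω) ∂μ = ∑' n, max (q n) 0 * h n := by
  have hint : Integrable h (μ.map Y) :=
    (integrable_const C).mono' Measurable.of_discrete.aestronglyMeasurable
      (ae_of_all _ fun n => (Real.norm_eq_abs _).trans_le (hC n))
  rw [← integral_map hY.aemeasurable Measurable.of_discrete.aestronglyMeasurable,
    integral_countable hint]
  congr 1 with n
  rw [measureReal_def, Measure.map_apply hY (measurableSet_singleton n)]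
  simp only [Set.preimage, Set.mem_singleton_iff, hlaw, ENNReal.toReal_ofReal', smul_eq_mul]

lemma tendsto_integral_of_poisson_law {Ω : Type*} [MeasurableSpace Ω] {l : Filter ℝ}
    {μ : ℝ → Measure Ω} {Y : ℝ → Ω → ℕ} {m : ℝ → ℝ} {L : ℝ} (hL : 0 ≤ L)
    (hm : Tendsto m l (𝓝 L)) (hfin : ∀ᶠ ε in l, IsFiniteMeasure (μ ε))
    (hY : ∀ᶠ ε in l, Measurable (Y ε))
    (hlaw : ∀ᶠ ε in l, ∀ n, μ ε {ω | Y ε ω = n} = ENNReal.ofReal (poissonWeight (m ε) n))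
    {h : ℕ → ℝ} {C : ℝ} (hC : ∀ n, |h n| ≤ C) :
    Tendsto (fun ε => ∫ ω, h (Y ε ω) ∂μ ε) l (𝓝 (∑' n, poissonWeight L n * h n)) := by
  have hlim := ((continuous_tsum_max_poissonWeight_mul hC).tendsto L).comp hm
  simp only [max_eq_left (poissonWeight_nonneg hL _)] at hlim
  refine hlim.congr' ?_
  filter_upwards [hfin, hY, hlaw] with ε hfinε hYε hlawε
  exact (integral_comp_eq_tsum_of_measure_eq_ofReal hYε hlawε hC).symm

lemma tendsto_integral_of_scaled_poisson_law {Ω : Type*} [MeasurableSpace Ω]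
    {μ : ℝ → Measure Ω} {Z : ℝ → Ω → ℕ} {lam : ℝ} (hlam : 0 ≤ lam)
    (hfin : ∀ ε : ℝ, 0 < ε → IsFiniteMeasure (μ ε)) (hZ : ∀ ε : ℝ, 0 < ε → Measurable (Z ε))
    (hlaw : ∀ ε : ℝ, 0 < ε → ∀ n,
      μ ε {ω | Z ε ω = n} = ENNReal.ofReal (poissonWeight (lam / ε) n))
    {h : ℝ → ℝ} (hh : Continuous h) {C : ℝ} (hC : ∀ y, |h y| ≤ C) :
    Tendsto (fun ε : ℝ => ∫ ω, h (ε * Z ε ω) ∂μ ε) (𝓝[>] 0) (𝓝 (h lam)) := by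
  refine (tendsto_tsum_poissonWeight_div_mul hlam hh hC).congr' ?_
  filter_upwards [self_mem_nhdsWithin] with ε (hε : 0 < ε)
  have := hfin ε hε
  rw [integral_comp_eq_tsum_of_measure_eq_ofReal (h := fun n : ℕ => h (ε * n)) (hZ ε hε)
    (hlaw ε hε) (fun n => hC _)]
  simp only [max_eq_left (poissonWeight_nonneg (div_nonneg hlam hε.le) _)]

lemma eq_mul_exp_of_hasDerivAt {z : ℝ → ℝ} {a : ℝ}
    (hz : ∀ s, 0 ≤ s → HasDerivAt z (-a * z s) s) {s : ℝ} (hs : 0 ≤ s) :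
    z s = z 0 * exp (-a * s) := by
  have hderiv : ∀ u, 0 ≤ u → HasDerivAt (fun v => z v * exp (a * v)) 0 u := fun u hu =>
    ((hz u hu).mul ((hasDerivAt_id' u).const_mul a).exp).congr_deriv (by ring)
  have hconst := constant_of_has_deriv_right_zero
    (fun u hu => (hderiv u hu.1).continuousAt.continuousWithinAt)
    (fun u hu => (hderiv u hu.1).hasDerivWithinAt) s ⟨hs, le_rfl⟩
  simp only [mul_zero, exp_zero, mul_one] at hconst
  rw [← hconst, mul_assoc, ← exp_add]
  simp

lemma abs_le_of_hasDerivAt_relaxation {w v : ℝ → ℝ} {ρ M a b : ℝ} (hρ : 0 ≤ ρ) (hab : a ≤ b)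
    (hw : ∀ u ∈ Icc a b, HasDerivAt w (ρ * (v u - w u)) u) (hv : ∀ u ∈ Icc a b, |v u| ≤ M) :
    |w b| ≤ exp (-(ρ * (b - a))) * |w a| + M := by
  have hM : 0 ≤ M := (abs_nonneg _).trans (hv a ⟨le_rfl, hab⟩)
  have hexp : ∀ u, HasDerivAt (fun u => exp (ρ * u)) (ρ * exp (ρ * u)) u := fun u =>
    ((hasDerivAt_id' u).const_mul ρ).exp.congr_deriv (by ring)
  have hφ : ∀ u ∈ Icc a b,
      HasDerivAt (fun u => exp (ρ * u) * w u) (ρ * exp (ρ * u) * v u) u := fun u hu =>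
    ((hexp u).mul (hw u hu)).congr_deriv (by ring)
  have hB : ∀ u, HasDerivAt (fun u => exp (ρ * a) * |w a| + M * (exp (ρ * u) - exp (ρ * a)))
      (M * (ρ * exp (ρ * u))) u := fun u =>
    (((hexp u).sub_const _).const_mul M).const_add _
  -- compare `e^{ρu} w(u)` with the solution of `B' = ρ M e^{ρu}`
  have hcmp := image_norm_le_of_norm_deriv_right_le_deriv_boundary
    (fun u hu => (hφ u hu).continuousAt.continuousWithinAt)
    (fun u hu => (hφ u (Ico_subset_Icc_self hu)).hasDerivWithinAt)
    (by simp [abs_of_pos (exp_pos _)]) hB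
    (fun u hu => by
      rw [Real.norm_eq_abs, abs_mul, abs_mul, abs_of_nonneg hρ, abs_of_pos (exp_pos _),
        mul_comm M]
      exact mul_le_mul_of_nonneg_left (hv u (Ico_subset_Icc_self hu)) (by positivity))
    ⟨hab, le_rfl⟩
  rw [Real.norm_eq_abs, abs_mul, abs_of_pos (exp_pos _)] at hcmp
  have hinv : exp (-(ρ * b)) * exp (ρ * b) = 1 := by rw [← exp_add]; simp
  have hdecay : exp (-(ρ * (b - a))) = exp (-(ρ * b)) * exp (ρ * a) := by
    rw [← exp_add]; ring_nf
  have hle : exp (-(ρ * (b - a))) ≤ 1 := exp_le_one_iff.mpr (by nlinarith)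
  calc |w b| = exp (-(ρ * b)) * (exp (ρ * b) * |w b|) := by rw [← mul_assoc, hinv, one_mul]
    _ ≤ exp (-(ρ * b)) * (exp (ρ * a) * |w a| + M * (exp (ρ * b) - exp (ρ * a))) :=
        mul_le_mul_of_nonneg_left hcmp (exp_pos _).le
    _ = exp (-(ρ * (b - a))) * |w a| + M * (1 - exp (-(ρ * (b - a)))) := by
        rw [hdecay]; linear_combination M * hinv
    _ ≤ exp (-(ρ * (b - a))) * |w a| + M := by nlinarith [exp_pos (-(ρ * (b - a)))]

lemma abs_sub_le_of_hasDerivAt_fast {y z : ℝ → ℝ} {a b ε L η s₀ s : ℝ} (ha : 0 < a) (hε : 0 < ε)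
    (hs : s₀ ≤ s) (hz : ∀ u ∈ Icc s₀ s, HasDerivAt z ((1 / ε) * (b * y u - a * z u)) u)
    (hy : ∀ u ∈ Icc s₀ s, |y u - L| ≤ η) :
    |z s - b / a * L| ≤ exp (-(a / ε * (s - s₀))) * |z s₀ - b / a * L| + |b / a| * η :=
  abs_le_of_hasDerivAt_relaxation (v := fun u => b / a * (y u - L)) (by positivity) hs
    (fun u hu => ((hz u hu).sub_const _).congr_deriv (by field_simp; ring))
    (fun u hu => by
      rw [abs_mul]; exact mul_le_mul_of_nonneg_left (hy u hu) (abs_nonneg _))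

section FastRelaxation

variable {y z : ℝ → ℝ → ℝ} {a b t z₀ C : ℝ}

lemma abs_le_of_hasDerivAt_fast (ha : 0 < a) (hz₀ : ∀ ε : ℝ, 0 < ε → z ε 0 = z₀)
    (hz : ∀ ε : ℝ, 0 < ε → ∀ s : ℝ, 0 ≤ s →
      HasDerivAt (z ε) ((1 / ε) * (b * y ε s - a * z ε s)) s)
    (hy : ∀ ε : ℝ, 0 < ε → ∀ s ∈ Icc 0 t, |y ε s| ≤ C) :
    ∀ ε : ℝ, 0 < ε → ∀ s ∈ Icc 0 t, |z ε s| ≤ |z₀| + |b / a| * C := by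
  intro ε hε s hs
  have := abs_sub_le_of_hasDerivAt_fast (L := 0) ha hε hs.1 (fun u hu => hz ε hε u hu.1)
    (fun u hu => by simpa using hy ε hε u ⟨hu.1, hu.2.trans hs.2⟩)
  simp only [mul_zero, sub_zero, hz₀ ε hε] at this
  have hdecay : exp (-(a / ε * s)) ≤ 1 := exp_le_one_iff.mpr (by
    have := mul_nonneg (div_pos ha hε).le hs.1; linarith)
  nlinarith [abs_nonneg z₀]

lemma tendsto_of_hasDerivAt_fast {L : ℝ} (ha : 0 < a) (ht : 0 < t)
    (hz₀ : ∀ ε : ℝ, 0 < ε → z ε 0 = z₀)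
    (hz : ∀ ε : ℝ, 0 < ε → ∀ s : ℝ, 0 ≤ s →
      HasDerivAt (z ε) ((1 / ε) * (b * y ε s - a * z ε s)) s)
    (hyC : ∀ ε : ℝ, 0 < ε → ∀ s ∈ Icc 0 t, |y ε s| ≤ C)
    (hy : Tendsto (Function.uncurry y) (𝓝[>] 0 ×ˢ 𝓝[≤] t) (𝓝 L)) :
    Tendsto (Function.uncurry z) (𝓝[>] 0 ×ˢ 𝓝[≤] t) (𝓝 (b / a * L)) := by
  rw [Metric.tendsto_nhds]
  intro η hη
  set k := |b / a|
  obtain ⟨pa, hpa, pb, hpb, hyclose⟩ := eventually_prod_iff.mp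
    (Metric.tendsto_nhds.mp hy (η / (2 * (k + 1))) (by positivity))
  obtain ⟨l, hlt, hlsub⟩ := mem_nhdsLE_iff_exists_Ioc_subset.mp hpb
  set δ := (t - max l 0) / 2
  have hδ : 0 < δ := by simp only [δ]; linarith [max_lt hlt ht]
  set D := |z₀| + k * C + |b / a * L|
  have hdecay : Tendsto (fun ε : ℝ => exp (-(a / ε * δ)) * D) (𝓝[>] 0) (𝓝 0) := by
    have hrate : Tendsto (fun ε : ℝ => a / ε * δ) (𝓝[>] 0) atTop := by
      simpa [div_eq_mul_inv] using
        (tendsto_inv_nhdsGT_zero.const_mul_atTop ha).atTop_mul_const hδ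
    simpa using (tendsto_exp_neg_atTop_nhds_zero.comp hrate).mul_const D
  refine eventually_prod_iff.mpr ⟨_, hpa.and (eventually_mem_nhdsWithin.and
    (hdecay.eventually (gt_mem_nhds (half_pos hη)))), _, Ioc_mem_nhdsLE (sub_lt_self t hδ), ?_⟩
  rintro ε ⟨hεa, (hε : 0 < ε), hεdecay⟩ s ⟨hs₁, hs₂⟩
  have hl : max l 0 < s - δ := by simp only [δ] at hs₁ ⊢; linarith
  -- on the window `[s - δ, s]`, long compared with the relaxation time `ε / a`, the initial
  -- value `z ε (s - δ)` is forgotten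
  have hwindow := abs_sub_le_of_hasDerivAt_fast (s₀ := s - δ) (s := s) (L := L)
    (η := η / (2 * (k + 1))) ha hε (by linarith)
    (fun u hu => hz ε hε u ((le_max_right _ _).trans (hl.trans_le hu.1).le))
    (fun u hu => by
      have := hyclose hεa (hlsub ⟨(le_max_left _ _).trans_lt (hl.trans_le hu.1),
        hu.2.trans hs₂⟩)
      rw [Real.dist_eq] at this; exact this.le)
  have hzbound := abs_le_of_hasDerivAt_fast ha hz₀ hz hyC ε hε (s - δ)
    ⟨(le_max_right _ _).trans hl.le, by linarith⟩
  have hstart : |z ε (s - δ) - b / a * L| ≤ D :=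
    (abs_sub _ _).trans (by simp only [D]; linarith)
  have hsmall : k * (η / (2 * (k + 1))) < η / 2 := by
    rw [mul_div_assoc', div_lt_div_iff₀ (by positivity) two_pos]; nlinarith [abs_nonneg (b / a)]
  rw [sub_sub_cancel] at hwindow
  rw [Function.uncurry_apply_pair, Real.dist_eq]
  nlinarith [mul_le_mul_of_nonneg_left hstart (exp_pos (-(a / ε * δ))).le]

end FastRelaxation

theorem tendsto_compartment_of_hasDerivAt {d : ℕ} {f g : ℕ → ℝ}
    (hfg : ∀ i, 1 ≤ i → i ≤ d → 0 < f i + g i) {x0in : ℝ} {xin : ℕ → ℝ}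
    {x : ℝ → ℝ → ℕ → ℝ} (hinit0 : ∀ ε : ℝ, 0 < ε → x ε 0 0 = x0in)
    (hinit : ∀ ε : ℝ, 0 < ε → ∀ i, 1 ≤ i → i ≤ d → x ε 0 i = xin i)
    (hslow : ∀ ε : ℝ, 0 < ε → ∀ s : ℝ, 0 ≤ s →
      HasDerivAt (fun u => x ε u 0) (-(f 0 + g 0) * x ε s 0) s)
    (hfast : ∀ ε : ℝ, 0 < ε → ∀ s : ℝ, 0 ≤ s → ∀ i, 1 ≤ i → i ≤ d →
      HasDerivAt (fun u => x ε u i)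
        ((1 / ε) * (f (i - 1) * x ε s (i - 1) - (f i + g i) * x ε s i)) s)
    {t : ℝ} (ht : 0 < t) {i : ℕ} (hi : i ≤ d) :
    Tendsto (fun ε => x ε t i) (𝓝[>] 0)
      (𝓝 ((∏ j ∈ Finset.range i, f j / (f (j + 1) + g (j + 1))) *
        (x0in * exp (-(f 0 + g 0) * t)))) := by
  have hx0 : ∀ ε : ℝ, 0 < ε → ∀ s : ℝ, 0 ≤ s → x ε s 0 = x0in * exp (-(f 0 + g 0) * s) :=
    fun ε hε s hs => by rw [eq_mul_exp_of_hasDerivAt (hslow ε hε) hs, hinit0 ε hε]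
  suffices key : ∀ k ≤ d, (∃ C, ∀ ε : ℝ, 0 < ε → ∀ s ∈ Icc 0 t, |x ε s k| ≤ C) ∧
      Tendsto (Function.uncurry fun ε s => x ε s k) (𝓝[>] 0 ×ˢ 𝓝[≤] t)
        (𝓝 ((∏ j ∈ Finset.range k, f j / (f (j + 1) + g (j + 1))) *
          (x0in * exp (-(f 0 + g 0) * t)))) from
    (key i hi).2.comp (tendsto_id.prodMk (tendsto_nhdsWithin_of_tendsto_nhds_of_eventually_within
      _ tendsto_const_nhds (Eventually.of_forall fun _ => self_mem_Iic)))
  intro k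
  induction k with
  | zero =>
    intro _
    refine ⟨?_, ?_⟩
    · obtain ⟨C, hC⟩ := isCompact_Icc.exists_bound_of_continuousOn
        (f := fun s => x0in * exp (-(f 0 + g 0) * s)) (by fun_prop)
      exact ⟨C, fun ε hε s hs => by rw [hx0 ε hε s hs.1]; exact hC s hs⟩
    · have hcont := ((by fun_prop : Continuous fun s => x0in * exp (-(f 0 + g 0) * s)).tendsto
        t).comp ((tendsto_snd (f := 𝓝[>] (0 : ℝ)) (g := 𝓝[≤] t)).mono_right nhdsWithin_le_nhds)
      rw [Finset.prod_range_zero, one_mul]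
      refine hcont.congr' ?_
      filter_upwards [prod_mem_prod self_mem_nhdsWithin (Ioc_mem_nhdsLE ht)] with p hp
      exact (hx0 p.1 hp.1 p.2 hp.2.1.le).symm
  | succ k ih =>
    intro hk
    obtain ⟨⟨C, hC⟩, hlim⟩ := ih (by omega)
    have ha := hfg (k + 1) (by omega) hk
    have hz : ∀ ε : ℝ, 0 < ε → ∀ s : ℝ, 0 ≤ s → HasDerivAt (fun u => x ε u (k + 1))
        ((1 / ε) * (f k * x ε s k - (f (k + 1) + g (k + 1)) * x ε s (k + 1))) s :=
      fun ε hε s hs => by simpa using hfast ε hε s hs (k + 1) (by omega) hk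
    have hz₀ : ∀ ε : ℝ, 0 < ε → x ε 0 (k + 1) = xin (k + 1) :=
      fun ε hε => hinit ε hε (k + 1) (by omega) hk
    refine ⟨⟨_, abs_le_of_hasDerivAt_fast (y := fun ε s => x ε s k) ha hz₀ hz hC⟩, ?_⟩
    convert tendsto_of_hasDerivAt_fast (y := fun ε s => x ε s k) ha ht hz₀ hz hC hlim using 2
    rw [Finset.prod_range_succ]
    ring

theorem stmt18_general
    (d : ℕ) (f g : ℕ → ℝ)
    (hf : ∀ j, j ≤ d - 1 → 0 ≤ f j)
    (hfg : ∀ i, 1 ≤ i → i ≤ d → 0 < f i + g i)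
    (x0in : ℝ) (hx0in : 0 < x0in) (xin : ℕ → ℝ)
    -- for each ε > 0, (x ε) is the solution of the rescaled linear ODE system
    (x : ℝ → ℝ → ℕ → ℝ)
    (hinit0 : ∀ ε : ℝ, 0 < ε → x ε 0 0 = x0in)
    (hinit : ∀ ε : ℝ, 0 < ε → ∀ i, 1 ≤ i → i ≤ d → x ε 0 i = xin i)
    (hslow : ∀ ε : ℝ, 0 < ε → ∀ s : ℝ, 0 ≤ s →
      HasDerivAt (fun u => x ε u 0) (-(f 0 + g 0) * x ε s 0) s)
    (hfast : ∀ ε : ℝ, 0 < ε → ∀ s : ℝ, 0 ≤ s → ∀ i, 1 ≤ i → i ≤ d →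
      HasDerivAt (fun u => x ε u i)
        ((1 / ε) * (f (i - 1) * x ε s (i - 1) - (f i + g i) * x ε s i)) s)
    -- fixed observation time
    (t : ℝ) (ht : 0 < t)
    -- the random variables
    (Ω : Type) [MeasurableSpace Ω] (μ : ℝ → Measure Ω)
    (hprob : ∀ ε : ℝ, 0 < ε → IsProbabilityMeasure (μ ε))
    (Z0 : ℝ → Ω → ℕ) (X : ℕ → ℝ → Ω → ℕ)
    (hmeas0 : ∀ ε : ℝ, 0 < ε → Measurable (Z0 ε))
    (hmeas : ∀ i, 1 ≤ i → i ≤ d → ∀ ε : ℝ, 0 < ε → Measurable (X i ε))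
    -- X₀^ε(t) = ε Z₀^ε with Z₀^ε Poisson of mean x₀^ε(t)/ε
    (hlaw0 : ∀ ε : ℝ, 0 < ε → ∀ n : ℕ,
      μ ε {ω | Z0 ε ω = n} =
        ENNReal.ofReal (Real.exp (-(x ε t 0 / ε)) * (x ε t 0 / ε) ^ n / Nat.factorial n))
    -- Xᵢ^ε(t) Poisson of mean xᵢ^ε(t)
    (hlaw : ∀ i, 1 ≤ i → i ≤ d → ∀ ε : ℝ, 0 < ε → ∀ n : ℕ,
      μ ε {ω | X i ε ω = n} =
        ENNReal.ofReal (Real.exp (-(x ε t i)) * (x ε t i) ^ n / Nat.factorial n)) :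
    -- X₀^ε(t) = ε Z₀^ε converges in law to the deterministic value x̄₀(t)
    (∀ h : ℝ → ℝ, Continuous h → (∃ C : ℝ, ∀ y : ℝ, |h y| ≤ C) →
      Tendsto (fun ε : ℝ => ∫ ω, h (ε * (Z0 ε ω : ℝ)) ∂(μ ε))
        (nhdsWithin 0 (Set.Ioi 0))
        (nhds (h (x0in * Real.exp (-(f 0 + g 0) * t))))) ∧
    -- Xᵢ^ε(t) converges in law to a Poisson variable of mean pᵢ x̄₀(t)
    (∀ i, 1 ≤ i → i ≤ d → ∀ h : ℝ → ℝ, Continuous h → (∃ C : ℝ, ∀ y : ℝ, |h y| ≤ C) →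
      Tendsto (fun ε : ℝ => ∫ ω, h ((X i ε ω : ℝ)) ∂(μ ε))
        (nhdsWithin 0 (Set.Ioi 0))
        (nhds (∑' n : ℕ,
          (Real.exp (-((∏ j ∈ Finset.range i, f j / (f (j + 1) + g (j + 1)))
              * (x0in * Real.exp (-(f 0 + g 0) * t))))
            * ((∏ j ∈ Finset.range i, f j / (f (j + 1) + g (j + 1)))
              * (x0in * Real.exp (-(f 0 + g 0) * t))) ^ n / Nat.factorial n)
          * h n))) := by
  have hfin : ∀ ε : ℝ, 0 < ε → IsFiniteMeasure (μ ε) := fun ε hε => by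
    have := hprob ε hε; infer_instance
  have hx0 : ∀ ε : ℝ, 0 < ε → x ε t 0 = x0in * exp (-(f 0 + g 0) * t) := fun ε hε => by
    rw [eq_mul_exp_of_hasDerivAt (hslow ε hε) ht.le, hinit0 ε hε]
  refine ⟨fun h hh ⟨C, hC⟩ => ?_, fun i hi₁ hi h hh ⟨C, hC⟩ => ?_⟩
  · refine tendsto_integral_of_scaled_poisson_law (by positivity) hfin hmeas0
      (fun ε hε n => ?_) hh hC
    rw [hlaw0 ε hε n, hx0 ε hε]
    rfl
  · have hp : 0 ≤ ∏ j ∈ Finset.range i, f j / (f (j + 1) + g (j + 1)) :=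
      Finset.prod_nonneg fun j hj => by
        have := Finset.mem_range.mp hj
        exact div_nonneg (hf j (by omega)) (hfg (j + 1) (by omega) (by omega)).le
    exact tendsto_integral_of_poisson_law (by positivity)
      (tendsto_compartment_of_hasDerivAt hfg hinit0 hinit hslow hfast ht hi)
      (eventually_mem_nhdsWithin.mono hfin) (eventually_mem_nhdsWithin.mono (hmeas i hi₁ hi))
      (eventually_mem_nhdsWithin.mono (hlaw i hi₁ hi)) (fun n => hC n)

/-- Proposition 3, law-level form: at a fixed time `t > 0`, in the linear
stochastic model, the scaled quiescent population converges in law to the deterministic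
limit `x̄₀(t)` and each growing compartment converges in law to a Poisson variable of
mean `pᵢ x̄₀(t)` as `ε → 0`. -/
theorem stmt18
    (d : ℕ) (hd : 1 ≤ d) (f g : ℕ → ℝ)
    (hf : ∀ j, j ≤ d - 1 → 0 ≤ f j) (hfd : f d = 0)
    (hg : ∀ j, j ≤ d → 0 ≤ g j)
    (hfg : ∀ i, 1 ≤ i → i ≤ d → 0 < f i + g i)
    (x0in : ℝ) (hx0in : 0 < x0in) (xin : ℕ → ℝ) (hxin : ∀ i, 1 ≤ i → i ≤ d → 0 ≤ xin i)
    -- for each ε > 0, (x ε) is the solution of the rescaled linear ODE system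
    (x : ℝ → ℝ → ℕ → ℝ)
    (hinit0 : ∀ ε : ℝ, 0 < ε → x ε 0 0 = x0in)
    (hinit : ∀ ε : ℝ, 0 < ε → ∀ i, 1 ≤ i → i ≤ d → x ε 0 i = xin i)
    (hslow : ∀ ε : ℝ, 0 < ε → ∀ s : ℝ, 0 ≤ s →
      HasDerivAt (fun u => x ε u 0) (-(f 0 + g 0) * x ε s 0) s)
    (hfast : ∀ ε : ℝ, 0 < ε → ∀ s : ℝ, 0 ≤ s → ∀ i, 1 ≤ i → i ≤ d →
      HasDerivAt (fun u => x ε u i)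
        ((1 / ε) * (f (i - 1) * x ε s (i - 1) - (f i + g i) * x ε s i)) s)
    -- fixed observation time
    (t : ℝ) (ht : 0 < t)
    -- the random variables
    (Ω : Type) [MeasurableSpace Ω] (μ : ℝ → Measure Ω)
    (hprob : ∀ ε : ℝ, 0 < ε → IsProbabilityMeasure (μ ε))
    (Z0 : ℝ → Ω → ℕ) (X : ℕ → ℝ → Ω → ℕ)
    (hmeas0 : ∀ ε : ℝ, 0 < ε → Measurable (Z0 ε))
    (hmeas : ∀ i, 1 ≤ i → i ≤ d → ∀ ε : ℝ, 0 < ε → Measurable (X i ε))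
    -- X₀^ε(t) = ε Z₀^ε with Z₀^ε Poisson of mean x₀^ε(t)/ε
    (hlaw0 : ∀ ε : ℝ, 0 < ε → ∀ n : ℕ,
      μ ε {ω | Z0 ε ω = n} =
        ENNReal.ofReal (Real.exp (-(x ε t 0 / ε)) * (x ε t 0 / ε) ^ n / Nat.factorial n))
    -- Xᵢ^ε(t) Poisson of mean xᵢ^ε(t)
    (hlaw : ∀ i, 1 ≤ i → i ≤ d → ∀ ε : ℝ, 0 < ε → ∀ n : ℕ,
      μ ε {ω | X i ε ω = n} =
        ENNReal.ofReal (Real.exp (-(x ε t i)) * (x ε t i) ^ n / Nat.factorial n)) :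
    -- X₀^ε(t) = ε Z₀^ε converges in law to the deterministic value x̄₀(t)
    (∀ h : ℝ → ℝ, Continuous h → (∃ C : ℝ, ∀ y : ℝ, |h y| ≤ C) →
      Tendsto (fun ε : ℝ => ∫ ω, h (ε * (Z0 ε ω : ℝ)) ∂(μ ε))
        (nhdsWithin 0 (Set.Ioi 0))
        (nhds (h (x0in * Real.exp (-(f 0 + g 0) * t))))) ∧
    -- Xᵢ^ε(t) converges in law to a Poisson variable of mean pᵢ x̄₀(t)
    (∀ i, 1 ≤ i → i ≤ d → ∀ h : ℝ → ℝ, Continuous h → (∃ C : ℝ, ∀ y : ℝ, |h y| ≤ C) →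
      Tendsto (fun ε : ℝ => ∫ ω, h ((X i ε ω : ℝ)) ∂(μ ε))
        (nhdsWithin 0 (Set.Ioi 0))
        (nhds (∑' n : ℕ,
          (Real.exp (-((∏ j ∈ Finset.range i, f j / (f (j + 1) + g (j + 1)))
              * (x0in * Real.exp (-(f 0 + g 0) * t))))
            * ((∏ j ∈ Finset.range i, f j / (f (j + 1) + g (j + 1)))
              * (x0in * Real.exp (-(f 0 + g 0) * t))) ^ n / Nat.factorial n)
          * h n))) :=
  stmt18_general d f g hf hfg x0in hx0in xin x hinit0 hinit hslow hfast t ht Ω μ hprob Z0 X hmeas0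
    hmeas hlaw0 hlaw
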